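/- Let n ≥ 3 and consider the links-and-triangles SUGM on n nodes with parameters (β_L, β_T) ∈ [0,1]². For any three distinct nodes i, j, k, the probability that all three edges ij, jk, ik appear in the observed graph equals β_T + (1−β_T)·q̃_L³, where q̃_L = β_L + (1−β_L)(1−(1−β_T)^{n−3}). -/

import Mathlib

/-!
Condition on the triangle `{i, j, k}`. If it formed, all three edges are observed. If not, the
edge `ij` is observed iff the link `ij` or one of the `n - 3` other triangles through `ij`
formed. These coordinate sets for `ij`, `jk` and `ik` are pairwise disjoint, since each
contains two of `i, j, k` and misses the third, so under the product measure the three events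
are independent, each of probability `q̃_L = 1 - (1 - β_L) (1 - β_T) ^ (n - 3)`.
-/

open MeasureTheory

/-- A Bernoulli measure on `Bool` with success probability `p`. -/
noncomputable def bern (p : ℝ) : Measure Bool :=
  ENNReal.ofReal p • Measure.dirac true + ENNReal.ofReal (1 - p) • Measure.dirac false

/-- The links-and-triangles SUGM on `n` nodes: independently, every pair of nodes forms a
direct link with probability `βL`, and every triple of nodes forms a triangle with
probability `βT`. -/
noncomputable def sugm (n : ℕ) (βL βT : ℝ) : Measure (Finset (Fin n) → Bool) :=
  Measure.pi fun s => if s.card = 2 then bern βL else if s.card = 3 then bern βT else bern 0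

/-- The observed graph: `i` and `j` are linked iff the direct link `{i, j}` formed or some
triangle `{i, j, k}` formed. -/
def edgeObs {n : ℕ} (ω : Finset (Fin n) → Bool) (i j : Fin n) : Bool :=
  ω {i, j} || decide (∃ k : Fin n, k ≠ i ∧ k ≠ j ∧ ω {i, j, k} = true)

open ProbabilityTheory Finset

section ProductMeasure

variable {ι : Type*} {Ω : ι → Type*}

theorem exists_eq_preimage_domRestrict_of_dependsOn_mem {s : Set ι} {E : Set (∀ i, Ω i)}
    (hE : DependsOn (· ∈ E) s) : ∃ E' : Set (∀ i : s, Ω i), E = s.domRestrict ⁻¹' E' := by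
  obtain ⟨g, hg⟩ := dependsOn_iff_exists_comp.mp hE
  exact ⟨{x | g x}, Set.ext fun ω => iff_of_eq (congrFun hg ω)⟩

theorem dependsOn_mem_inter {s t : Set ι} {E F : Set (∀ i, Ω i)} (hE : DependsOn (· ∈ E) s)
    (hF : DependsOn (· ∈ F) t) : DependsOn (· ∈ E ∩ F) (s ∪ t) := fun _ _ h =>
  congrArg₂ And (hE fun i hi => h i (.inl hi)) (hF fun i hi => h i (.inr hi))

variable [Fintype ι] [∀ i, MeasurableSpace (Ω i)] (μ : ∀ i, Measure (Ω i))
  [∀ i, IsProbabilityMeasure (μ i)]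

theorem measure_pi_setOf_apply_eq [∀ i, MeasurableSingletonClass (Ω i)] (i : ι) (b : Ω i) :
    Measure.pi μ {ω | ω i = b} = μ i {b} :=
  (measurePreserving_eval μ i).measure_preimage (measurableSet_singleton b).nullMeasurableSet

theorem measure_pi_inter_of_dependsOn [∀ i, Countable (Ω i)]
    [∀ i, MeasurableSingletonClass (Ω i)] {S T : Finset ι} (hST : Disjoint S T)
    {E F : Set (∀ i, Ω i)} (hE : DependsOn (· ∈ E) (S : Set ι))
    (hF : DependsOn (· ∈ F) (T : Set ι)) :
    Measure.pi μ (E ∩ F) = Measure.pi μ E * Measure.pi μ F := by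
  obtain ⟨E', rfl⟩ := exists_eq_preimage_domRestrict_of_dependsOn_mem hE
  obtain ⟨F', rfl⟩ := exists_eq_preimage_domRestrict_of_dependsOn_mem hF
  have hind := (iIndepFun_pi (μ := μ) (X := fun _ => id) fun _ => aemeasurable_id).indepFun_finset
    S T hST fun i => measurable_pi_apply i
  exact hind.measure_inter_preimage_eq_mul E' F' (.of_discrete) (.of_discrete)

end ProductMeasure

section Combinatorics

variable {n : ℕ}

-- The coordinates other than the triangle `{i, j, k}` whose formation creates the edge `ij`.
def linkCoords (i j k : Fin n) : Finset (Finset (Fin n)) :=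
  insert {i, j} ((univ \ {i, j, k}).image fun c => {i, j, c})

def linkEvent (i j k : Fin n) : Set (Finset (Fin n) → Bool) :=
  {ω | ∃ s ∈ linkCoords i j k, ω s = true}

theorem dependsOn_mem_linkEvent (i j k : Fin n) :
    DependsOn (· ∈ linkEvent i j k) (linkCoords i j k : Set (Finset (Fin n))) :=
  fun _ _ h => by
    simp only [linkEvent, Set.mem_ofPred_eq]
    exact propext <| exists_congr fun s => and_congr_right fun hs => by rw [h s hs]

variable {i j k : Fin n}

theorem mem_linkCoords_iff {s : Finset (Fin n)} :
    s ∈ linkCoords i j k ↔ s = {i, j} ∨ ∃ c, c ≠ i ∧ c ≠ j ∧ c ≠ k ∧ s = {i, j, c} := by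
  simp only [linkCoords, mem_insert, mem_image, mem_sdiff, mem_univ, true_and, mem_singleton,
    not_or]
  constructor <;> rintro (h | ⟨c, h⟩) <;> grind

theorem mem_and_notMem_of_mem_linkCoords (hki : k ≠ i) (hkj : k ≠ j) {s : Finset (Fin n)}
    (hs : s ∈ linkCoords i j k) : i ∈ s ∧ j ∈ s ∧ k ∉ s := by
  rcases mem_linkCoords_iff.mp hs with rfl | ⟨c, -, -, hck, rfl⟩ <;> grind

theorem edgeObs_eq_true_iff (ω : Finset (Fin n) → Bool) (hki : k ≠ i) (hkj : k ≠ j) :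
    edgeObs ω i j = true ↔ ω {i, j, k} = true ∨ ω ∈ linkEvent i j k := by
  simp only [edgeObs, linkEvent, mem_linkCoords_iff, Bool.or_eq_true, decide_eq_true_eq,
    Set.mem_ofPred_eq]
  constructor
  · rintro (h | ⟨c, hci, hcj, hc⟩)
    · exact .inr ⟨_, .inl rfl, h⟩
    · by_cases hck : c = k
      · exact .inl (hck ▸ hc)
      · exact .inr ⟨_, .inr ⟨c, hci, hcj, hck, rfl⟩, hc⟩
  · rintro (h | ⟨s, hs | ⟨c, hci, hcj, -, hs⟩, h⟩)
    · exact .inr ⟨k, hki, hkj, h⟩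
    · exact .inl (hs ▸ h)
    · exact .inr ⟨c, hci, hcj, hs ▸ h⟩

theorem setOf_edgeObs_triangle (hij : i ≠ j) (hjk : j ≠ k) (hik : i ≠ k) :
    {ω | edgeObs ω i j = true ∧ edgeObs ω j k = true ∧ edgeObs ω i k = true} =
      {ω | ω {i, j, k} = true} ∪ ({ω | ω {i, j, k} = false} ∩
        (linkEvent i j k ∩ (linkEvent j k i ∩ linkEvent i k j))) := by
  ext ω
  simp only [Set.mem_ofPred_eq, Set.mem_union, Set.mem_inter_iff,
    edgeObs_eq_true_iff ω hik.symm hjk.symm, edgeObs_eq_true_iff ω hij hik,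
    edgeObs_eq_true_iff ω hij.symm hjk]
  rw [pair_comm k i, insert_comm j i, pair_comm k j]
  cases ω {i, j, k} <;> simp

theorem disjoint_linkCoords_triangle (hij : i ≠ j) (hjk : j ≠ k) (hik : i ≠ k) :
    Disjoint {{i, j, k}} (linkCoords i j k ∪ linkCoords j k i ∪ linkCoords i k j) ∧
      Disjoint (linkCoords i j k) (linkCoords j k i ∪ linkCoords i k j) ∧
      Disjoint (linkCoords j k i) (linkCoords i k j) := by
  have h₁ := @mem_and_notMem_of_mem_linkCoords n i j k hik.symm hjk.symm
  have h₂ := @mem_and_notMem_of_mem_linkCoords n j k i hij hik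
  have h₃ := @mem_and_notMem_of_mem_linkCoords n i k j hij.symm hjk
  refine ⟨disjoint_left.mpr ?_, disjoint_left.mpr ?_, disjoint_left.mpr ?_⟩ <;> grind

end Combinatorics

section Probability

variable {n : ℕ} {i j k : Fin n}

theorem measure_pi_setOf_edgeObs_triangle (ν : Finset (Fin n) → Measure Bool)
    [∀ s, IsProbabilityMeasure (ν s)] (hij : i ≠ j) (hjk : j ≠ k) (hik : i ≠ k) :
    Measure.pi ν {ω | edgeObs ω i j = true ∧ edgeObs ω j k = true ∧ edgeObs ω i k = true} =
      ν {i, j, k} {true} + ν {i, j, k} {false} * (Measure.pi ν (linkEvent i j k) *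
        (Measure.pi ν (linkEvent j k i) * Measure.pi ν (linkEvent i k j))) := by
  obtain ⟨hdisj₁, hdisj₂, hdisj₃⟩ := disjoint_linkCoords_triangle hij hjk hik
  have hdep₁ : DependsOn (· ∈ {ω : Finset (Fin n) → Bool | ω {i, j, k} = false})
      (({{i, j, k}} : Finset (Finset (Fin n))) : Set (Finset (Fin n))) := fun _ _ h => by
    simp only [Set.mem_ofPred_eq, h {i, j, k} (mem_singleton_self _)]
  have hdep₂₃ :=
    dependsOn_mem_inter (dependsOn_mem_linkEvent j k i) (dependsOn_mem_linkEvent i k j)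
  have hdep₁₂₃ := dependsOn_mem_inter (dependsOn_mem_linkEvent i j k) hdep₂₃
  rw [← coe_union] at hdep₂₃
  rw [← coe_union, ← coe_union, ← union_assoc] at hdep₁₂₃
  have hdisj : Disjoint {ω : Finset (Fin n) → Bool | ω {i, j, k} = true}
      {ω | ω {i, j, k} = false} := Set.disjoint_left.mpr fun _ h h' => by simp_all
  rw [setOf_edgeObs_triangle hij hjk hik, measure_union (hdisj.mono_right Set.inter_subset_left)
      (.of_discrete), measure_pi_inter_of_dependsOn ν hdisj₁ hdep₁ hdep₁₂₃,
    measure_pi_inter_of_dependsOn ν hdisj₂ (dependsOn_mem_linkEvent i j k) hdep₂₃,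
    measure_pi_inter_of_dependsOn ν hdisj₃ (dependsOn_mem_linkEvent j k i)
      (dependsOn_mem_linkEvent i k j), measure_pi_setOf_apply_eq, measure_pi_setOf_apply_eq]

end Probability

section Bernoulli

theorem bern_singleton_true (p : ℝ) : bern p {true} = ENNReal.ofReal p := by simp [bern]

theorem bern_singleton_false (p : ℝ) : bern p {false} = ENNReal.ofReal (1 - p) := by simp [bern]

theorem isProbabilityMeasure_bern {p : ℝ} (hp : p ∈ Set.Icc 0 1) :
    IsProbabilityMeasure (bern p) :=
  ⟨by simp [bern, ← ENNReal.ofReal_add hp.1 (sub_nonneg.mpr hp.2)]⟩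

end Bernoulli

section SUGM

variable {n : ℕ} {βL βT : ℝ}

def formationProb (βL βT : ℝ) (s : Finset (Fin n)) : ℝ :=
  if s.card = 2 then βL else if s.card = 3 then βT else 0

theorem formationProb_mem_Icc (hL : βL ∈ Set.Icc 0 1) (hT : βT ∈ Set.Icc 0 1)
    (s : Finset (Fin n)) : formationProb βL βT s ∈ Set.Icc 0 1 := by
  unfold formationProb
  split_ifs
  exacts [hL, hT, ⟨le_rfl, zero_le_one⟩]

theorem isProbabilityMeasure_bern_formationProb (hL : βL ∈ Set.Icc 0 1)
    (hT : βT ∈ Set.Icc 0 1) (s : Finset (Fin n)) :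
    IsProbabilityMeasure (bern (formationProb βL βT s)) :=
  isProbabilityMeasure_bern (formationProb_mem_Icc hL hT s)

theorem formationProb_of_card_eq_two {s : Finset (Fin n)} (hs : s.card = 2) :
    formationProb βL βT s = βL := by
  simp [formationProb, hs]

theorem formationProb_of_card_eq_three {s : Finset (Fin n)} (hs : s.card = 3) :
    formationProb βL βT s = βT := by
  simp [formationProb, hs]

theorem sugm_eq_pi :
    sugm n βL βT = Measure.pi fun s => bern (formationProb βL βT s) := by
  simp only [sugm, formationProb, apply_ite bern]

-- `q̃_L`: the probability that an edge forms other than through one given triangle.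
def linkProb (n : ℕ) (βL βT : ℝ) : ℝ :=
  βL + (1 - βL) * (1 - (1 - βT) ^ (n - 3))

theorem linkProb_nonneg (hL : βL ∈ Set.Icc 0 1) (hT : βT ∈ Set.Icc 0 1) :
    0 ≤ linkProb n βL βT := by
  have : (1 - βT) ^ (n - 3) ≤ 1 := pow_le_one₀ (by linarith [hT.2]) (by linarith [hT.1])
  unfold linkProb
  nlinarith [hL.1, hL.2]

variable {i j k : Fin n}

theorem prod_linkCoords {M : Type*} [CommMonoid M] (f : Finset (Fin n) → M) :
    ∏ s ∈ linkCoords i j k, f s = f {i, j} * ∏ c ∈ univ \ {i, j, k}, f {i, j, c} := by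
  rw [linkCoords, prod_insert, prod_image]
  · intro c hc c' _ h
    have : c ∈ ({i, j, c'} : Finset (Fin n)) := (Finset.ext_iff.mp h c).mp (by simp)
    grind
  · simp only [mem_image, not_exists, not_and]
    intro c hc h
    have : c ∈ ({i, j} : Finset (Fin n)) := (Finset.ext_iff.mp h c).mp (by simp)
    grind

theorem sugm_linkEvent (hL : βL ∈ Set.Icc 0 1) (hT : βT ∈ Set.Icc 0 1) (hij : i ≠ j)
    (hki : k ≠ i) (hkj : k ≠ j) :
    sugm n βL βT (linkEvent i j k) = ENNReal.ofReal (linkProb n βL βT) := by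
  have := isProbabilityMeasure_bern_formationProb (n := n) hL hT
  have hcompl : (linkEvent i j k)ᶜ = (linkCoords i j k : Set _).pi fun _ => {false} := by
    ext; simp [linkEvent]
  have htriangle : ∀ c ∈ univ \ {i, j, k}, formationProb βL βT {i, j, c} = βT := fun c hc =>
    formationProb_of_card_eq_three (card_eq_three.mpr ⟨i, j, c, hij, by grind, by grind, rfl⟩)
  have hcard : (univ \ {i, j, k}).card = n - 3 := by
    rw [← compl_eq_univ_sdiff, card_compl, Fintype.card_fin,
      card_eq_three.mpr ⟨i, j, k, hij, hki.symm, hkj.symm, rfl⟩]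
  have hL' : 0 ≤ 1 - βL := sub_nonneg.mpr hL.2
  have hT' : 0 ≤ 1 - βT := sub_nonneg.mpr hT.2
  rw [sugm_eq_pi, ← compl_compl (linkEvent i j k), prob_compl_eq_one_sub .of_discrete, hcompl,
    Measure.pi_pi_finset, prod_linkCoords, prod_congr rfl fun c hc => by rw [htriangle c hc],
    prod_const, hcard,
    bern_singleton_false, bern_singleton_false, formationProb_of_card_eq_two (card_pair hij),
    ← ENNReal.ofReal_pow hT', ← ENNReal.ofReal_mul hL', ← ENNReal.ofReal_one,
    ← ENNReal.ofReal_sub _ (mul_nonneg hL' (pow_nonneg hT' _))]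
  congr 1
  unfold linkProb
  ring

end SUGM

theorem stmt4_general (n : ℕ) (βL βT : ℝ)
    (hβL : βL ∈ Set.Icc (0 : ℝ) 1) (hβT : βT ∈ Set.Icc (0 : ℝ) 1)
    (i j k : Fin n) (hij : i ≠ j) (hjk : j ≠ k) (hik : i ≠ k) :
    sugm n βL βT
        {ω | edgeObs ω i j = true ∧ edgeObs ω j k = true ∧ edgeObs ω i k = true} =
      ENNReal.ofReal
        (βT + (1 - βT) * (βL + (1 - βL) * (1 - (1 - βT) ^ (n - 3))) ^ 3) := by
  have := isProbabilityMeasure_bern_formationProb (n := n) hβL hβT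
  have hq := linkProb_nonneg (n := n) hβL hβT
  have hT' : 0 ≤ 1 - βT := sub_nonneg.mpr hβT.2
  rw [sugm_eq_pi, measure_pi_setOf_edgeObs_triangle _ hij hjk hik, ← sugm_eq_pi,
    sugm_linkEvent hβL hβT hij hik.symm hjk.symm, sugm_linkEvent hβL hβT hjk hij hik,
    sugm_linkEvent hβL hβT hik hij.symm hjk, bern_singleton_true, bern_singleton_false,
    formationProb_of_card_eq_three (card_eq_three.mpr ⟨i, j, k, hij, hik, hjk, rfl⟩),
    ← pow_three, ← ENNReal.ofReal_pow hq, ← ENNReal.ofReal_mul hT',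
    ← ENNReal.ofReal_add hβT.1 (mul_nonneg hT' (pow_nonneg hq 3))]
  rfl

/-- In the links-and-triangles SUGM on `n ≥ 3` nodes with parameters
`(βL, βT) ∈ [0,1]²`, for distinct nodes `i, j, k` the probability that all three edges
`ij`, `jk`, `ik` appear in the observed graph equals `βT + (1 - βT) * q̃L ^ 3`, where
`q̃L = βL + (1 - βL) * (1 - (1 - βT) ^ (n - 3))`. -/
theorem stmt4 (n : ℕ) (hn : 3 ≤ n) (βL βT : ℝ)
    (hβL : βL ∈ Set.Icc (0 : ℝ) 1) (hβT : βT ∈ Set.Icc (0 : ℝ) 1)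
    (i j k : Fin n) (hij : i ≠ j) (hjk : j ≠ k) (hik : i ≠ k) :
    sugm n βL βT
        {ω | edgeObs ω i j = true ∧ edgeObs ω j k = true ∧ edgeObs ω i k = true} =
      ENNReal.ofReal
        (βT + (1 - βT) * (βL + (1 - βL) * (1 - (1 - βT) ^ (n - 3))) ^ 3) :=
  stmt4_general n βL βT hβL hβT i j k hij hjk hik
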